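/- arXiv:2108.01771 — 3 statements merged into one kernel-verified Lean document; each statement's English description precedes it below -/
import Mathlib

section
/- Let Y be a real-valued random variable on a probability space (Ω, F, P) with E[|Y|] < ∞, and let α ∈ (0, 1). Then s = VaR_α(Y) attains the infimum defining CVaR_α(Y); consequently, CVaR_α(Y) = VaR_α(Y) + (1/α)·E[max(Y − VaR_α(Y), 0)]. -/
/-!
For every `s` and `t`, pointwise comparison of `(y - t)⁺` with `(y - s)⁺` gives
`E(Y - t)⁺ ≤ E(Y - s)⁺ + (s - t) P(Y > t)` and `E(Y - t)⁺ + (t - s) P(Y ≥ t) ≤ E(Y - s)⁺`.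
Using the first for `s ≥ t` and the second for `s ≤ t`, any `t` with `P(Y > t) ≤ α ≤ P(Y ≥ t)`
minimises `s ↦ α s + E(Y - s)⁺`, hence also the CVaR objective. `VaR_α(Y)` is such a `t`: it is
the least `z` with `F z ≥ 1 - α` for the right-continuous distribution function `F` of `Y`, so
`F t ≥ 1 - α` while the left limit of `F` at `t` is at most `1 - α`.
-/

open MeasureTheory

/-- Conditional Value-at-Risk at level `α ∈ (0,1]` of a random cost `Y`:
`CVaR_α(Y) := inf_{s ∈ ℝ} ( s + (1/α)·E[max(Y − s, 0)] )`. -/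
noncomputable def CVaR {Ω : Type*} [MeasurableSpace Ω] (P : Measure Ω) (α : ℝ)
    (Y : Ω → ℝ) : ℝ :=
  ⨅ s : ℝ, (s + (1 / α) * ∫ ω, max (Y ω - s) 0 ∂P)

/-- Value-at-Risk at level `α ∈ (0,1)`: the left-side `(1−α)`-quantile
`VaR_α(Y) := inf{ z ∈ ℝ : P(Y ≤ z) ≥ 1 − α }`. -/
noncomputable def VaR {Ω : Type*} [MeasurableSpace Ω] (P : Measure Ω) (α : ℝ)
    (Y : Ω → ℝ) : ℝ :=
  sInf {z : ℝ | ENNReal.ofReal (1 - α) ≤ P {ω | Y ω ≤ z}}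

open ProbabilityTheory Set Filter Topology

theorem StieltjesFunction.isLeast_sInf_setOf_le (F : StieltjesFunction ℝ) {c : ℝ}
    (hne : ∃ z, c ≤ F z) (hlow : ∃ z, F z < c) :
    IsLeast {z | c ≤ F z} (sInf {z | c ≤ F z}) := by
  set S := {z | c ≤ F z}
  obtain ⟨b, hb⟩ := hlow
  have hbdd : BddBelow S := ⟨b, fun z (hz : c ≤ F z) => by
    by_contra! hzb
    linarith [F.mono hzb.le]⟩
  refine ⟨?_, fun z hz => csInf_le hbdd hz⟩
  have hright : Tendsto F (𝓝[>] sInf S) (𝓝 (F (sInf S))) :=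
    (F.right_continuous _).mono Ioi_subset_Ici_self
  refine ge_of_tendsto hright (eventually_nhdsWithin_of_forall fun z hz => ?_)
  obtain ⟨w, hw, hwz⟩ := (csInf_lt_iff hbdd hne).1 hz
  exact hw.trans (F.mono hwz.le)

theorem leftLim_le_of_isLeast_setOf_le {f : ℝ → ℝ} (hf : Monotone f) {c q : ℝ}
    (hq : IsLeast {z | c ≤ f z} q) : Function.leftLim f q ≤ c :=
  le_of_tendsto (hf.tendsto_leftLim q) <| eventually_nhdsWithin_of_forall fun z (hz : z < q) =>
    le_of_not_ge fun (hcz : c ≤ f z) => (hq.2 hcz).not_gt hz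

section Quantile

variable {Ω : Type*} [MeasurableSpace Ω] {P : Measure Ω} [IsProbabilityMeasure P] {Y : Ω → ℝ}

theorem VaR_eq_sInf_cdf (hY : AEMeasurable Y P) (α : ℝ) :
    VaR P α Y = sInf {z | 1 - α ≤ cdf (P.map Y) z} := by
  have := Measure.isProbabilityMeasure_map (μ := P) hY
  unfold VaR
  congr 1
  ext z
  rw [mem_ofPred_eq, mem_ofPred_eq, ← ENNReal.ofReal_le_ofReal_iff (cdf_nonneg _ z), ofReal_cdf,
    Measure.map_apply_of_aemeasurable hY measurableSet_Iic]
  rfl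

theorem isLeast_VaR (hY : AEMeasurable Y P) {α : ℝ} (hα : α ∈ Ioo (0 : ℝ) 1) :
    IsLeast {z | 1 - α ≤ cdf (P.map Y) z} (VaR P α Y) := by
  rw [VaR_eq_sInf_cdf hY]
  refine StieltjesFunction.isLeast_sInf_setOf_le _ ?_ ?_
  · exact ((tendsto_cdf_atTop _).eventually (eventually_ge_nhds (by linarith [hα.1]))).exists
  · exact ((tendsto_cdf_atBot _).eventually (eventually_lt_nhds (by linarith [hα.2]))).exists

theorem measureReal_VaR_lt_le (hY : AEMeasurable Y P) {α : ℝ} (hα : α ∈ Ioo (0 : ℝ) 1) :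
    P.real {ω | VaR P α Y < Y ω} ≤ α := by
  have := Measure.isProbabilityMeasure_map (μ := P) hY
  have hq := (isLeast_VaR hY hα).1
  rw [mem_ofPred_eq, cdf_eq_real] at hq
  change P.real (Y ⁻¹' Ioi _) ≤ α
  rw [← map_measureReal_apply_of_aemeasurable hY measurableSet_Ioi,
    ← compl_Iic, probReal_compl_eq_one_sub measurableSet_Iic]
  linarith

theorem le_measureReal_VaR_le (hY : AEMeasurable Y P) {α : ℝ} (hα : α ∈ Ioo (0 : ℝ) 1) :
    α ≤ P.real {ω | VaR P α Y ≤ Y ω} := by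
  have := Measure.isProbabilityMeasure_map (μ := P) hY
  have hleft := leftLim_le_of_isLeast_setOf_le (monotone_cdf _) (isLeast_VaR hY hα)
  change α ≤ P.real (Y ⁻¹' Ici _)
  rw [← map_measureReal_apply_of_aemeasurable hY measurableSet_Ici,
    measureReal_def, ← measure_cdf (P.map Y), StieltjesFunction.measure_Ici _ (tendsto_cdf_atTop _),
    ENNReal.toReal_ofReal (by linarith [hα.1])]
  linarith

end Quantile

section Minimization

variable {Ω : Type*} [MeasurableSpace Ω] {P : Measure Ω} [IsFiniteMeasure P] {Y : Ω → ℝ}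

theorem integrable_max_sub (hY : Integrable Y P) (r : ℝ) :
    Integrable (fun ω => max (Y ω - r) 0) P :=
  (hY.sub (integrable_const r)).pos_part

theorem integral_max_sub_le_add_measureReal (hY : Integrable Y P) (s t : ℝ) :
    ∫ ω, max (Y ω - t) 0 ∂P ≤ ∫ ω, max (Y ω - s) 0 ∂P + (s - t) * P.real {ω | t < Y ω} := by
  set A := {ω | t < Y ω}
  have hA : NullMeasurableSet A P := nullMeasurableSet_lt aemeasurable_const hY.aemeasurable
  have hind : Integrable (A.indicator fun _ => s - t) P := (integrable_const _).indicator₀ hA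
  calc ∫ ω, max (Y ω - t) 0 ∂P
      ≤ ∫ ω, (max (Y ω - s) 0 + A.indicator (fun _ => s - t) ω) ∂P := by
        refine integral_mono (integrable_max_sub hY t) ((integrable_max_sub hY s).add hind)
          fun ω => ?_
        simp only [A, indicator_apply, mem_ofPred_eq]
        split_ifs <;> grind
    _ = ∫ ω, max (Y ω - s) 0 ∂P + (s - t) * P.real A := by
        rw [integral_add (integrable_max_sub hY s) hind, integral_indicator₀ hA, setIntegral_const,
          smul_eq_mul, mul_comm]

theorem integral_max_sub_add_measureReal_le (hY : Integrable Y P) (s t : ℝ) :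
    ∫ ω, max (Y ω - t) 0 ∂P + (t - s) * P.real {ω | t ≤ Y ω} ≤ ∫ ω, max (Y ω - s) 0 ∂P := by
  set A := {ω | t ≤ Y ω}
  have hA : NullMeasurableSet A P := nullMeasurableSet_le aemeasurable_const hY.aemeasurable
  have hind : Integrable (A.indicator fun _ => t - s) P := (integrable_const _).indicator₀ hA
  calc ∫ ω, max (Y ω - t) 0 ∂P + (t - s) * P.real A
      = ∫ ω, (max (Y ω - t) 0 + A.indicator (fun _ => t - s) ω) ∂P := by
        rw [integral_add (integrable_max_sub hY t) hind, integral_indicator₀ hA, setIntegral_const,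
          smul_eq_mul, mul_comm]
    _ ≤ ∫ ω, max (Y ω - s) 0 ∂P := by
        refine integral_mono ((integrable_max_sub hY t).add hind) (integrable_max_sub hY s)
          fun ω => ?_
        simp only [A, indicator_apply, mem_ofPred_eq]
        split_ifs <;> grind

theorem mul_add_integral_max_sub_le (hY : Integrable Y P) {α t : ℝ}
    (hgt : P.real {ω | t < Y ω} ≤ α) (hge : α ≤ P.real {ω | t ≤ Y ω}) (s : ℝ) :
    α * t + ∫ ω, max (Y ω - t) 0 ∂P ≤ α * s + ∫ ω, max (Y ω - s) 0 ∂P := by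
  rcases le_total t s with hts | hst
  · linarith [integral_max_sub_le_add_measureReal hY s t,
      mul_le_mul_of_nonneg_left hgt (sub_nonneg.2 hts)]
  · linarith [integral_max_sub_add_measureReal_le hY s t,
      mul_le_mul_of_nonneg_left hge (sub_nonneg.2 hst)]

end Minimization

/-- For an integrable `Y` and `α ∈ (0, 1)`, the choice `s = VaR_α(Y)` attains the infimum
defining `CVaR_α(Y)`, so that
`CVaR_α(Y) = VaR_α(Y) + (1/α)·E[max(Y − VaR_α(Y), 0)]`. -/
theorem stmt_11 {Ω : Type*} [MeasurableSpace Ω] (P : Measure Ω) [IsProbabilityMeasure P]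
    (Y : Ω → ℝ) (hY : Integrable Y P) (α : ℝ) (hα : α ∈ Set.Ioo (0 : ℝ) 1) :
    CVaR P α Y = VaR P α Y + (1 / α) * ∫ ω, max (Y ω - VaR P α Y) 0 ∂P := by
  have hmin := mul_add_integral_max_sub_le hY (measureReal_VaR_lt_le hY.aemeasurable hα)
    (le_measureReal_VaR_le hY.aemeasurable hα)
  refine (IsLeast.isGLB ⟨mem_range_self _, forall_mem_range.2 fun s => ?_⟩).ciInf_eq
  have hα0 : 0 < α := hα.1
  calc VaR P α Y + 1 / α * ∫ ω, max (Y ω - VaR P α Y) 0 ∂P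
      = (α * VaR P α Y + ∫ ω, max (Y ω - VaR P α Y) 0 ∂P) / α := by field_simp
    _ ≤ (α * s + ∫ ω, max (Y ω - s) 0 ∂P) / α := div_le_div_of_nonneg_right (hmin s) hα0.le
    _ = s + 1 / α * ∫ ω, max (Y ω - s) 0 ∂P := by field_simp
end

section
/- Let Y be a real-valued random variable on a probability space (Ω, F, P) with E[|Y|] < ∞, and let α ∈ (0, 1]. Then CVaR_α(Y) = (1/α)·∫_{1−α}^{1} VaR_{1−ℓ}(Y) dℓ, where the integral is over ℓ ∈ (1−α, 1). -/
open MeasureTheory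

/-!
Let `q` be the quantile function of the law of `Y`. Under Lebesgue measure on `(0, 1)`, `q` has
the law of `Y`, and `VaR_{1-ℓ}(Y) = q ℓ`; hence `E[(Y - s)⁺] = ∫₀¹ (q - s)⁺` and everything reduces
to a statement about the monotone integrable function `q`. For every `s`,
`α s + ∫₀¹ (q - s)⁺ ≥ ∫_{1-α}^1 q`, since `(q - s)⁺ ≥ q - s` on `(1-α, 1)` and `≥ 0` elsewhere. At
`s = q t` with `t > 1 - α` monotonicity makes `(q - s)⁺` vanish on `(0, t]`, and the excess over
`∫_{1-α}^1 q` is `(t - (1 - α)) q t - ∫_{1-α}^t q`, which tends to `0` as `t ↓ 1 - α`.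
-/

open Set Filter ProbabilityTheory
open scoped Topology

namespace ProbabilityTheory

-- Only meaningful for `ℓ ∈ (0, 1)`: outside, the set is empty or unbounded below and `sInf` is `0`.
noncomputable def quantile (μ : Measure ℝ) (ℓ : ℝ) : ℝ := sInf {z | ℓ ≤ cdf μ z}

variable {μ : Measure ℝ} {ℓ : ℝ}

theorem bddBelow_setOf_le_cdf (hℓ : 0 < ℓ) : BddBelow {z | ℓ ≤ cdf μ z} := by
  obtain ⟨x, hx⟩ := ((tendsto_cdf_atBot μ).eventually (eventually_lt_nhds hℓ)).exists
  exact ⟨x, fun z hz => le_of_not_gt fun hzx => (hz.trans (monotone_cdf μ hzx.le)).not_gt hx⟩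

theorem le_cdf_quantile (hℓ : ℓ ∈ Ioo 0 1) : ℓ ≤ cdf μ (quantile μ ℓ) := by
  have hne : {z | ℓ ≤ cdf μ z}.Nonempty :=
    ((tendsto_cdf_atTop μ).eventually (eventually_ge_nhds hℓ.2)).exists
  have hrc : Tendsto (cdf μ) (𝓝[>] (quantile μ ℓ)) (𝓝 (cdf μ (quantile μ ℓ))) :=
    ((cdf μ).right_continuous _).mono_left (nhdsWithin_mono _ Ioi_subset_Ici_self)
  refine ge_of_tendsto hrc ?_
  filter_upwards [self_mem_nhdsWithin] with z hz
  obtain ⟨w, hw, hwz⟩ := exists_lt_of_csInf_lt hne hz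
  exact hw.trans (monotone_cdf μ hwz.le)

theorem quantile_le_iff (hℓ : ℓ ∈ Ioo 0 1) {z : ℝ} : quantile μ ℓ ≤ z ↔ ℓ ≤ cdf μ z :=
  ⟨fun h => (le_cdf_quantile hℓ).trans (monotone_cdf μ h),
    fun h => csInf_le (bddBelow_setOf_le_cdf hℓ.1) h⟩

theorem monotoneOn_quantile : MonotoneOn (quantile μ) (Ioo 0 1) :=
  fun _ ha _ hb hab => (quantile_le_iff ha).mpr (hab.trans (le_cdf_quantile hb))

theorem aemeasurable_quantile : AEMeasurable (quantile μ) (volume.restrict (Ioo 0 1)) :=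
  aemeasurable_restrict_of_monotoneOn measurableSet_Ioo monotoneOn_quantile

variable [IsProbabilityMeasure μ]

instance : IsProbabilityMeasure (volume.restrict (Ioo (0 : ℝ) 1)) :=
  ⟨by simp [Real.volume_Ioo]⟩

theorem map_quantile_volume : (volume.restrict (Ioo 0 1)).map (quantile μ) = μ := by
  have := Measure.isProbabilityMeasure_map (aemeasurable_quantile (μ := μ))
  refine Measure.ext_of_Iic _ _ fun z => ?_
  have hpre : quantile μ ⁻¹' Iic z ∩ Ioo 0 1 = Iic (cdf μ z) ∩ Ioo 0 1 := by
    ext ℓ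
    simp only [mem_inter_iff, mem_preimage, mem_Iic, and_congr_left_iff]
    exact fun hℓ => quantile_le_iff hℓ
  rw [Measure.map_apply_of_aemeasurable aemeasurable_quantile measurableSet_Iic,
    Measure.restrict_apply' measurableSet_Ioo, hpre, ← ofReal_cdf,
    measure_congr (EventuallyEq.rfl.inter Ioo_ae_eq_Ioc), inter_comm, Ioc_inter_Iic,
    min_eq_right (cdf_le_one μ z), Real.volume_Ioc, sub_zero]

variable {E : Type*} [NormedAddCommGroup E] {f : ℝ → E}

theorem integral_comp_quantile [NormedSpace ℝ E] (hf : AEStronglyMeasurable f μ) :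
    ∫ ℓ in Ioo 0 1, f (quantile μ ℓ) = ∫ y, f y ∂μ := by
  rw [← integral_map aemeasurable_quantile (by rwa [map_quantile_volume]), map_quantile_volume]

theorem integrableOn_comp_quantile (hf : Integrable f μ) :
    IntegrableOn (fun ℓ => f (quantile μ ℓ)) (Ioo 0 1) := by
  have hf' : Integrable f ((volume.restrict (Ioo 0 1)).map (quantile μ)) := by
    rwa [map_quantile_volume]
  exact hf'.comp_aemeasurable aemeasurable_quantile

end ProbabilityTheory

theorem VaR_one_sub_eq_quantile {Ω : Type*} [MeasurableSpace Ω] {P : Measure Ω}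
    [IsProbabilityMeasure P] {Y : Ω → ℝ} (hY : AEMeasurable Y P) (ℓ : ℝ) :
    VaR P (1 - ℓ) Y = quantile (P.map Y) ℓ := by
  have := Measure.isProbabilityMeasure_map hY
  simp only [VaR, quantile, sub_sub_cancel]
  congr! 3 with z
  rw [← ENNReal.ofReal_le_ofReal_iff (cdf_nonneg _ z), ofReal_cdf,
    Measure.map_apply_of_aemeasurable hY measurableSet_Iic]
  rfl

theorem tendsto_setIntegral_Ioc_nhdsGT {E : Type*} [NormedAddCommGroup E] [NormedSpace ℝ E]
    {f : ℝ → E} {a b : ℝ} (hab : a < b)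
    (hf : IntegrableOn f (Ioc a b)) :
    Tendsto (fun t => ∫ x in Ioc a t, f x) (𝓝[>] a) (𝓝 0) := by
  have hcont : ContinuousWithinAt (fun t => ∫ x in a..t, f x) (Icc a b) a :=
    intervalIntegral.continuousWithinAt_primitive (by simp)
      (by simpa [hab.le, intervalIntegrable_iff_integrableOn_Ioc_of_le] using hf)
  have hlim : Tendsto (fun t => ∫ x in a..t, f x) (𝓝[>] a) (𝓝 0) := by
    rw [← nhdsWithin_Ioc_eq_nhdsGT hab]
    simpa using hcont.tendsto.mono_left (nhdsWithin_mono _ Ioc_subset_Icc_self)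
  refine hlim.congr' ?_
  filter_upwards [self_mem_nhdsWithin] with t ht
  exact intervalIntegral.integral_of_le (le_of_lt ht)

section MonotoneIntegral

variable {q : ℝ → ℝ}

theorem setIntegral_Ioo_le_add_setIntegral_posPart (hq : IntegrableOn q (Ioo 0 1)) {α : ℝ}
    (hα : α ∈ Icc 0 1) (s : ℝ) :
    ∫ ℓ in Ioo (1 - α) 1, q ℓ ≤ α * s + ∫ ℓ in Ioo 0 1, max (q ℓ - s) 0 := by
  have hsub : Ioo (1 - α) 1 ⊆ Ioo 0 1 := Ioo_subset_Ioo_left (by linarith [hα.2])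
  have hq' : IntegrableOn q (Ioo (1 - α) 1) := hq.mono_set hsub
  have hpos : IntegrableOn (fun ℓ => max (q ℓ - s) 0) (Ioo 0 1) :=
    (hq.sub (integrable_const _)).pos_part
  have hvol : volume.real (Ioo (1 - α) 1) = α := by
    simp [measureReal_def, Real.volume_Ioo, hα.1]
  calc ∫ ℓ in Ioo (1 - α) 1, q ℓ = α * s + ∫ ℓ in Ioo (1 - α) 1, (q ℓ - s) := by
        rw [integral_sub hq' (integrable_const _), setIntegral_const, hvol, smul_eq_mul]
        ring
    _ ≤ α * s + ∫ ℓ in Ioo (1 - α) 1, max (q ℓ - s) 0 := by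
        refine add_le_add_right ?_ _
        exact integral_mono (hq'.sub (integrable_const _)) (hpos.mono_set hsub)
          fun ℓ => le_max_left _ _
    _ ≤ α * s + ∫ ℓ in Ioo 0 1, max (q ℓ - s) 0 := by
        refine add_le_add_right ?_ _
        exact setIntegral_mono_set hpos (.of_forall fun ℓ => le_max_right _ _) hsub.eventuallyLE

theorem setIntegral_posPart_sub_apply_eq (hmono : MonotoneOn q (Ioo 0 1))
    (hq : IntegrableOn q (Ioo 0 1)) {t : ℝ} (ht : t ∈ Ioo 0 1) :
    ∫ ℓ in Ioo 0 1, max (q ℓ - q t) 0 = (∫ ℓ in Ioo t 1, q ℓ) - (1 - t) * q t := by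
  have hleft : Ioc 0 t ⊆ Ioo 0 1 := Ioc_subset_Ioo_right ht.2
  have hright : Ioo t 1 ⊆ Ioo 0 1 := Ioo_subset_Ioo_left ht.1.le
  have hpos : IntegrableOn (fun ℓ => max (q ℓ - q t) 0) (Ioo 0 1) :=
    (hq.sub (integrable_const _)).pos_part
  have below : ∫ ℓ in Ioc 0 t, max (q ℓ - q t) 0 = 0 := by
    refine setIntegral_eq_zero_of_forall_eq_zero fun ℓ hℓ => max_eq_right ?_
    exact sub_nonpos.mpr (hmono (hleft hℓ) ht hℓ.2)
  have above : ∫ ℓ in Ioo t 1, max (q ℓ - q t) 0 = ∫ ℓ in Ioo t 1, (q ℓ - q t) :=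
    setIntegral_congr_fun measurableSet_Ioo fun ℓ hℓ =>
      max_eq_left (sub_nonneg.mpr (hmono ht (hright hℓ) hℓ.1.le))
  rw [← Ioc_union_Ioo_eq_Ioo ht.1.le ht.2,
    setIntegral_union (Ioc_disjoint_Ioi_same.mono_right Ioo_subset_Ioi_self) measurableSet_Ioo
      (hpos.mono_set hleft) (hpos.mono_set hright), below, above, zero_add,
    integral_sub (hq.mono_set hright) (integrable_const _), setIntegral_const,
    measureReal_def, Real.volume_Ioo, ENNReal.toReal_ofReal (by linarith [ht.2]), smul_eq_mul]

theorem add_setIntegral_posPart_sub_apply_eq (hmono : MonotoneOn q (Ioo 0 1))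
    (hq : IntegrableOn q (Ioo 0 1)) {α t : ℝ} (hα : α ≤ 1) (ht : t ∈ Ioo (1 - α) 1) :
    α * q t + ∫ ℓ in Ioo 0 1, max (q ℓ - q t) 0
      = (∫ ℓ in Ioo (1 - α) 1, q ℓ) + ((t - (1 - α)) * q t - ∫ ℓ in Ioc (1 - α) t, q ℓ) := by
  have h0 : 0 ≤ 1 - α := by linarith
  have hsub : Ioo (1 - α) 1 ⊆ Ioo 0 1 := Ioo_subset_Ioo_left h0
  have hsplit :
      ∫ ℓ in Ioo (1 - α) 1, q ℓ = (∫ ℓ in Ioc (1 - α) t, q ℓ) + ∫ ℓ in Ioo t 1, q ℓ := by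
    rw [← Ioc_union_Ioo_eq_Ioo ht.1.le ht.2]
    exact setIntegral_union (Ioc_disjoint_Ioi_same.mono_right Ioo_subset_Ioi_self)
      measurableSet_Ioo (hq.mono_set (Ioc_subset_Ioo_right ht.2 |>.trans hsub))
      (hq.mono_set (Ioo_subset_Ioo_left ht.1.le |>.trans hsub))
  rw [setIntegral_posPart_sub_apply_eq hmono hq (hsub ht), hsplit]
  ring

theorem iInf_add_setIntegral_posPart_eq (hmono : MonotoneOn q (Ioo 0 1))
    (hq : IntegrableOn q (Ioo 0 1)) {α : ℝ} (hα : α ∈ Ioc 0 1) :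
    ⨅ s, (s + (1 / α) * ∫ ℓ in Ioo 0 1, max (q ℓ - s) 0)
      = (1 / α) * ∫ ℓ in Ioo (1 - α) 1, q ℓ := by
  obtain ⟨hα0, hα1⟩ := hα
  set F : ℝ → ℝ := fun s => s + (1 / α) * ∫ ℓ in Ioo 0 1, max (q ℓ - s) 0
  set R := (1 / α) * ∫ ℓ in Ioo (1 - α) 1, q ℓ
  have hlower : ∀ s, R ≤ F s := fun s => by
    have := setIntegral_Ioo_le_add_setIntegral_posPart hq ⟨hα0.le, hα1⟩ s
    calc R ≤ (1 / α) * (α * s + ∫ ℓ in Ioo 0 1, max (q ℓ - s) 0) :=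
          mul_le_mul_of_nonneg_left this (by positivity)
      _ = F s := by simp only [F]; field_simp
  refine le_antisymm ?_ (le_ciInf hlower)
  have hsub : Ioo (1 - α) 1 ⊆ Ioo 0 1 := Ioo_subset_Ioo_left (by linarith)
  obtain ⟨t₀, ht₀⟩ : (Ioo (1 - α) 1).Nonempty := nonempty_Ioo.mpr (by linarith)
  set G : ℝ → ℝ := fun t => R + (1 / α) * ((t - (1 - α)) * q t₀ - ∫ ℓ in Ioc (1 - α) t, q ℓ)
  have hG : Tendsto G (𝓝[>] (1 - α)) (𝓝 R) := by
    have hlin : Tendsto (fun t => (t - (1 - α)) * q t₀) (𝓝[>] (1 - α)) (𝓝 0) :=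
      tendsto_nhdsWithin_of_tendsto_nhds
        (by simpa using ((tendsto_id (x := 𝓝 (1 - α))).sub_const (1 - α)).mul_const (q t₀))
    have hint := tendsto_setIntegral_Ioc_nhdsGT ht₀.1
      (hq.mono_set (Ioc_subset_Ioo_right ht₀.2 |>.trans hsub))
    simpa [G] using ((hlin.sub hint).const_mul (1 / α)).const_add R
  refine ge_of_tendsto hG ?_
  filter_upwards [Ioc_mem_nhdsGT ht₀.1] with t ht
  have ht' : t ∈ Ioo (1 - α) 1 := ⟨ht.1, ht.2.trans_lt ht₀.2⟩
  have hqt : q t ≤ q t₀ := hmono (hsub ht') (hsub ht₀) ht.2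
  calc ⨅ s, F s ≤ F (q t) := ciInf_le ⟨R, forall_mem_range.mpr hlower⟩ _
    _ = R + (1 / α) * ((t - (1 - α)) * q t - ∫ ℓ in Ioc (1 - α) t, q ℓ) := by
        have := add_setIntegral_posPart_sub_apply_eq hmono hq hα1 ht'
        simp only [F, R]
        field_simp
        linear_combination this
    _ ≤ G t := by
        have : (t - (1 - α)) * q t ≤ (t - (1 - α)) * q t₀ :=
          mul_le_mul_of_nonneg_left hqt (by linarith [ht.1])
        simp only [G]
        gcongr

end MonotoneIntegral

/-- CVaR as Average Value-at-Risk: for an integrable `Y` and `α ∈ (0, 1]`,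
`CVaR_α(Y) = (1/α)·∫_{1−α}^{1} VaR_{1−ℓ}(Y) dℓ`. -/
theorem stmt_12 {Ω : Type*} [MeasurableSpace Ω] (P : Measure Ω) [IsProbabilityMeasure P]
    (Y : Ω → ℝ) (hY : Integrable Y P) (α : ℝ) (hα : α ∈ Set.Ioc (0 : ℝ) 1) :
    CVaR P α Y = (1 / α) * ∫ ℓ in Set.Ioo (1 - α) 1, VaR P (1 - ℓ) Y := by
  have hYm := hY.aemeasurable
  have := Measure.isProbabilityMeasure_map hYm
  have hq : IntegrableOn (quantile (P.map Y)) (Ioo 0 1) :=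
    integrableOn_comp_quantile (f := id)
      ((integrable_map_measure aestronglyMeasurable_id hYm).mpr hY)
  have hpos (s : ℝ) :
      ∫ ω, max (Y ω - s) 0 ∂P = ∫ ℓ in Ioo 0 1, max (quantile (P.map Y) ℓ - s) 0 := by
    rw [integral_comp_quantile (f := fun y => max (y - s) 0) (by fun_prop),
      integral_map hYm (by fun_prop)]
  simp only [CVaR, hpos, VaR_one_sub_eq_quantile hYm]
  exact iInf_add_setIntegral_posPart_eq monotoneOn_quantile hq hα
end

section
/- Let X be a Polish space (separable, completely metrizable) and A a nonempty compact Polish space, and let v : X × A → ℝ be continuous. Then the function J : X → ℝ defined by J(x) := inf_{u ∈ A} v(x, u) is continuous, and there exists a Borel-measurable function κ : X → A such that v(x, κ(x)) = J(x) for all x ∈ X. -/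
/-!
Continuity of `J` is the usual fact that an infimum over a compact parameter space of a jointly
continuous function is continuous. For the selector, the graph `G = {(x, u) | v (x, u) = J x}` is
closed with nonempty sections. Any compact metrizable `A` is a continuous image of the Cantor space,
and the Cantor space embeds continuously into `ℝ` (as the Cantor set); after lifting `G` there, one
selects the point of each section whose real image is smallest. Its sublevel sets are projections
of closed sets along a compact factor, hence closed, so this choice is measurable.
-/

open MeasureTheory Set Topology

theorem continuous_iInf_of_compactSpace {X A : Type*} [TopologicalSpace X] [TopologicalSpace A]
    [CompactSpace A] {v : X × A → ℝ} (hv : Continuous v) :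
    Continuous fun x => ⨅ u : A, v (x, u) := by
  have h := isCompact_univ.continuous_sInf (f := fun x u => v (x, u)) hv
  simp only [image_univ] at h
  exact h

section Selection

variable {X : Type*} [TopologicalSpace X] [MeasurableSpace X] [OpensMeasurableSpace X]

theorem IsClosed.exists_measurable_selection_of_injective_real {T : Type*} [TopologicalSpace T]
    [CompactSpace T] [MeasurableSpace T] [BorelSpace T] {f : T → ℝ} (hf : Continuous f)
    (hf_inj : Function.Injective f) {G : Set (X × T)} (hG : IsClosed G)
    (hG_ne : ∀ x, ∃ t, (x, t) ∈ G) :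
    ∃ κ : X → T, Measurable κ ∧ ∀ x, (x, κ x) ∈ G := by
  have hmin : ∀ x, ∃ t, (x, t) ∈ G ∧ f t = sInf (f '' {t | (x, t) ∈ G}) := fun x =>
    ((hG.preimage (Continuous.prodMk_right x)).isCompact.image hf).sInf_mem
      (Set.Nonempty.image f (hG_ne x))
  choose κ hκG hκf using hmin
  refine ⟨κ, ?_, hκG⟩
  have hfκ : Measurable (f ∘ κ) := by
    refine measurable_of_Iic fun r => IsClosed.measurableSet ?_
    have : f ∘ κ ⁻¹' Iic r = Prod.fst '' (G ∩ {p | f p.2 ≤ r}) := by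
      ext x
      refine ⟨fun hx => ⟨(x, κ x), ⟨hκG x, hx⟩, rfl⟩, ?_⟩
      rintro ⟨⟨x, t⟩, ⟨htG, htr⟩, rfl⟩
      simp only [mem_preimage, Function.comp_apply, mem_Iic, hκf]
      exact (csInf_le ((hG.preimage (Continuous.prodMk_right x)).isCompact.image hf).bddBelow
        (mem_image_of_mem f htG)).trans htr
    rw [this]
    exact isClosedMap_fst_of_compactSpace _
      (hG.inter (_root_.isClosed_le (hf.comp continuous_snd) continuous_const))
  exact ((hf.isClosedEmbedding hf_inj).measurableEmbedding.measurable_comp_iff).1 hfκ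

theorem IsClosed.exists_measurable_selection {A : Type*} [TopologicalSpace A] [CompactSpace A]
    [TopologicalSpace.MetrizableSpace A] [Nonempty A] [MeasurableSpace A] [BorelSpace A]
    {G : Set (X × A)}
    (hG : IsClosed G) (hG_ne : ∀ x, ∃ u, (x, u) ∈ G) :
    ∃ κ : X → A, Measurable κ ∧ ∀ x, (x, κ x) ∈ G := by
  let := TopologicalSpace.metrizableSpaceMetric A
  obtain ⟨g, hg, hg_surj⟩ := exists_nat_bool_continuous_surjective_of_compact A
  have hG' : IsClosed {p : X × (ℕ → Bool) | (p.1, g p.2) ∈ G} :=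
    hG.preimage (continuous_fst.prodMk (hg.comp continuous_snd))
  obtain ⟨κ, hκ, hκG⟩ := hG'.exists_measurable_selection_of_injective_real
    (continuous_subtype_val.comp cantorSetHomeomorphNatToBool.symm.continuous)
    (Subtype.val_injective.comp cantorSetHomeomorphNatToBool.symm.injective)
    fun x => by
      obtain ⟨u, hu⟩ := hG_ne x
      obtain ⟨s, rfl⟩ := hg_surj u
      exact ⟨s, hu⟩
  exact ⟨g ∘ κ, hg.measurable.comp hκ, hκG⟩

end Selection

theorem stmt_15_general {X A : Type*}
    [TopologicalSpace X] [MeasurableSpace X] [BorelSpace X]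
    [TopologicalSpace A] [PolishSpace A] [CompactSpace A] [Nonempty A]
    [MeasurableSpace A] [BorelSpace A]
    (v : X × A → ℝ) (hv : Continuous v) :
    Continuous (fun x => ⨅ u : A, v (x, u)) ∧
    ∃ κ : X → A, Measurable κ ∧ ∀ x, v (x, κ x) = ⨅ u : A, v (x, u) := by
  have hJ := continuous_iInf_of_compactSpace hv
  have hG : IsClosed {p : X × A | v p = ⨅ u : A, v (p.1, u)} :=
    isClosed_eq hv (hJ.comp continuous_fst)
  have hG_ne : ∀ x, ∃ u, v (x, u) = ⨅ u : A, v (x, u) := fun x =>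
    (isCompact_range (hv.comp (Continuous.prodMk_right x))).sInf_mem (range_nonempty _)
  exact ⟨hJ, hG.exists_measurable_selection hG_ne⟩

/-- Measurable selection for continuous objectives (Bertsekas–Shreve Prop. 7.32/7.33):
if `X` is Polish, `A` is a nonempty compact Polish space, and `v : X × A → ℝ` is
continuous, then `J(x) := inf_{u ∈ A} v(x, u)` is continuous and there is a
Borel-measurable selector `κ : X → A` with `v(x, κ(x)) = J(x)` for every `x`. -/
theorem stmt_15 {X A : Type*}
    [TopologicalSpace X] [PolishSpace X] [MeasurableSpace X] [BorelSpace X]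
    [TopologicalSpace A] [PolishSpace A] [CompactSpace A] [Nonempty A]
    [MeasurableSpace A] [BorelSpace A]
    (v : X × A → ℝ) (hv : Continuous v) :
    Continuous (fun x => ⨅ u : A, v (x, u)) ∧
    ∃ κ : X → A, Measurable κ ∧ ∀ x, v (x, κ x) = ⨅ u : A, v (x, u) :=
  stmt_15_general v hv
end
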